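/- arXiv:2302.07464 — 5 statements merged into one kernel-verified Lean document; each statement's English description precedes it below -/
import Mathlib

section
/- Let M ∈ ℝ^{m×n} and ψ = ρ_m ∘ M : ℝⁿ → 𝕋^m. Then the image ψ(ℝⁿ) is dense in 𝕋^m if and only if the rows of M are linearly independent over ℚ. -/
/-!
Here `ψ` is `M.torusHom`. The closure `K` of `ψ(ℝⁿ)` is a closed subgroup of the torus, and the
character `mFourier k` is trivial on `ψ(ℝⁿ)`, equivalently on `K`, exactly when `kᵀM = 0`. It
therefore suffices to show that a closed subgroup `K` on which only the trivial character is
trivial is the whole torus. Let `ν` be the Haar measure of `K` pushed to the torus. Every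
nontrivial character integrates to zero against `ν`, so `ν` and its translate by any `y` have
the same Fourier coefficients and hence, by Stone–Weierstrass, coincide; if `y ∉ K`, the
translate gives `K` measure zero.
-/

open MeasureTheory BoundedContinuousFunction UnitAddTorus

theorem AddChar.integral_eq_zero_of_ne_one {G : Type*} [AddGroup G] [MeasurableSpace G]
    [MeasurableAdd G] {μ : Measure G} [μ.IsAddLeftInvariant] (χ : AddChar G ℂ) {a : G}
    (ha : χ a ≠ 1) : ∫ x, χ x ∂μ = 0 := by
  have h : ∫ x, χ x ∂μ = χ a * ∫ x, χ x ∂μ := by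
    conv_lhs => rw [← integral_add_left_eq_self _ a]
    simp only [AddChar.map_add_eq_mul, integral_const_mul]
  have : (1 - χ a) * ∫ x, χ x ∂μ = 0 := by linear_combination h
  exact (mul_eq_zero.mp this).resolve_left (sub_ne_zero.mpr ha.symm)

theorem UnitAddCircle.eq_zero_of_forall_coe_mul_eq_zero {c : ℝ}
    (h : ∀ t : ℝ, ((c * t : ℝ) : UnitAddCircle) = 0) : c = 0 := by
  by_contra hc
  obtain ⟨z, hz⟩ := (AddCircle.coe_eq_zero_iff 1).mp (h (2 * c)⁻¹)
  rw [mul_inv_rev, ← mul_assoc, mul_inv_cancel₀ hc, one_mul, zsmul_one] at hz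
  have h0 : (0 : ℝ) < z := by rw [hz]; norm_num
  have h1 : (z : ℝ) < 1 := by rw [hz]; norm_num
  norm_cast at h0 h1
  omega

namespace UnitAddTorus

variable {d : Type*} [Fintype d]

theorem mFourier_apply_eq_toCircle (n : d → ℤ) (x : UnitAddTorus d) :
    mFourier n x = AddCircle.toCircle (∑ i, n i • x i) := by
  simp only [mFourier, fourier_apply, ContinuousMap.coe_mk]
  induction (Finset.univ : Finset d) using Finset.cons_induction with
  | empty => simp
  | cons i s _ ih => simp [ih, AddCircle.toCircle_add]

noncomputable def mFourierChar (n : d → ℤ) : AddChar (UnitAddTorus d) ℂ where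
  toFun := mFourier n
  map_zero_eq_one' := by simp [mFourier_apply_eq_toCircle]
  map_add_eq_mul' x y := by
    simp [mFourier_apply_eq_toCircle, Finset.sum_add_distrib, AddCircle.toCircle_add]

theorem mFourier_eq_one_iff (n : d → ℤ) (x : UnitAddTorus d) :
    mFourier n x = 1 ↔ ∑ i, n i • x i = 0 := by
  rw [mFourier_apply_eq_toCircle, Circle.coe_eq_one, ← AddCircle.toCircle_zero,
    (AddCircle.injective_toCircle one_ne_zero).eq_iff]

theorem eq_zero_of_forall_mFourier_eq_one {k : d → ℤ} (h : ∀ x, mFourier k x = 1) :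
    k = 0 := by
  classical
  ext j
  refine Int.cast_eq_zero.mp
    (UnitAddCircle.eq_zero_of_forall_coe_mul_eq_zero (c := (k j : ℝ)) fun t => ?_)
  simpa [mFourier_eq_one_iff, Pi.single_apply] using h (Pi.single j t)

theorem integral_eq_of_mem_mFourierSubalgebra {μ ν : Measure (UnitAddTorus d)}
    [IsFiniteMeasure μ] [IsFiniteMeasure ν]
    (h : ∀ n, ∫ x, mFourier n x ∂μ = ∫ x, mFourier n x ∂ν) {f : C(UnitAddTorus d, ℂ)}
    (hf : f ∈ mFourierSubalgebra d) : ∫ x, f x ∂μ = ∫ x, f x ∂ν := by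
  have hint (g : C(UnitAddTorus d, ℂ)) {ρ : Measure (UnitAddTorus d)} [IsFiniteMeasure ρ] :
      Integrable g ρ :=
    g.continuous.integrable_of_hasCompactSupport (.of_compactSpace _)
  change f ∈ (mFourierSubalgebra d).toSubalgebra.toSubmodule at hf
  rw [mFourierSubalgebra_coe] at hf
  induction hf using Submodule.span_induction with
  | mem _ hg => obtain ⟨n, rfl⟩ := hg; exact h n
  | zero => simp
  | add g g' _ _ hg hg' =>
    simp only [ContinuousMap.add_apply, integral_add (hint g) (hint g'), hg, hg']
  | smul c g _ hg => simp only [ContinuousMap.smul_apply, smul_eq_mul, integral_const_mul, hg]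

theorem ext_of_forall_integral_mFourier_eq {μ ν : Measure (UnitAddTorus d)}
    [IsFiniteMeasure μ] [IsFiniteMeasure ν]
    (h : ∀ n, ∫ x, mFourier n x ∂μ = ∫ x, mFourier n x ∂ν) : μ = ν := by
  let A : StarSubalgebra ℂ (UnitAddTorus d →ᵇ ℂ) :=
    (mFourierSubalgebra d).comap (toContinuousMapStarₐ ℂ)
  refine ext_of_forall_mem_subalgebra_integral_eq_of_polish (A := A) ?_
    fun g hg => integral_eq_of_mem_mFourierSubalgebra h hg
  intro x y hxy
  obtain ⟨_, ⟨f, hf, rfl⟩, hfxy⟩ := mFourierSubalgebra_separatesPoints hxy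
  exact ⟨_, ⟨_, ⟨mkOfCompact f, hf, rfl⟩, rfl⟩, hfxy⟩

theorem map_add_left_map_subtype_val_eq_self {K : AddSubgroup (UnitAddTorus d)} (μ : Measure K)
    [IsFiniteMeasure μ] [μ.IsAddLeftInvariant]
    (hchar : ∀ n, (∀ x ∈ K, mFourier n x = 1) → n = 0) (y : UnitAddTorus d) :
    (μ.map (↑)).map (y + ·) = μ.map (↑) := by
  refine ext_of_forall_integral_mFourier_eq fun n => ?_
  have integral_map_val (f : UnitAddTorus d → ℂ) (hf : Continuous f) :
      ∫ x, f x ∂(μ.map (↑)) = ∫ z, f z ∂μ :=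
    integral_map measurable_subtype_coe.aemeasurable hf.aestronglyMeasurable
  rw [integral_map (measurable_const_add y).aemeasurable
      (mFourier n).continuous.aestronglyMeasurable, integral_map_val _ (by fun_prop),
    integral_map_val _ (by fun_prop)]
  by_cases h : ∀ x ∈ K, mFourier n x = 1
  · simp [hchar n h, mFourier_zero]
  · push Not at h
    obtain ⟨a, ha, hna⟩ := h
    have hzero : ∫ z : K, mFourier n z ∂μ = 0 :=
      ((mFourierChar n).compAddMonoidHom K.subtype).integral_eq_zero_of_ne_one
        (a := ⟨a, ha⟩) hna
    calc ∫ z : K, mFourier n (y + z) ∂μ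
        = ∫ z : K, mFourier n y * mFourier n z ∂μ :=
          integral_congr_ae (.of_forall fun z => (mFourierChar n).map_add_eq_mul y z)
      _ = ∫ z : K, mFourier n z ∂μ := by rw [integral_const_mul, hzero, mul_zero]

theorem addSubgroup_eq_top_of_forall_mFourier_eq_one {K : AddSubgroup (UnitAddTorus d)}
    (hK : IsClosed (K : Set (UnitAddTorus d)))
    (hchar : ∀ n, (∀ x ∈ K, mFourier n x = 1) → n = 0) : K = ⊤ := by
  have : CompactSpace K := isCompact_iff_compactSpace.mp hK.isCompact
  let μ : Measure K := Measure.addHaar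
  let ν : Measure (UnitAddTorus d) := μ.map (↑)
  rw [eq_top_iff]
  intro y _
  by_contra hy
  have hmeas : MeasurableSet (K : Set (UnitAddTorus d)) := hK.measurableSet
  have htranslate : ν.map (y + ·) K = 0 := by
    rw [Measure.map_apply (measurable_const_add y) hmeas,
      Measure.map_apply measurable_subtype_coe (measurable_const_add y hmeas)]
    convert measure_empty (μ := μ)
    ext z
    simpa using fun h => hy (by simpa using K.sub_mem h z.2)
  have hpos : ν K ≠ 0 := by
    rw [Measure.map_apply measurable_subtype_coe hmeas, Subtype.coe_preimage_self]
    exact Measure.measure_univ_ne_zero.mpr (NeZero.ne μ)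
  have hν : ν.map (y + ·) = ν := map_add_left_map_subtype_val_eq_self μ hchar y
  exact hpos (hν ▸ htranslate)

theorem dense_iff_forall_mFourier_eq_one (H : AddSubgroup (UnitAddTorus d)) :
    Dense (H : Set (UnitAddTorus d)) ↔ ∀ n, (∀ x ∈ H, mFourier n x = 1) → n = 0 := by
  refine ⟨fun hH n hn => eq_zero_of_forall_mFourier_eq_one fun x => ?_, fun h => ?_⟩
  · exact congrFun (Continuous.ext_on hH (mFourier n).continuous continuous_const hn) x
  · rw [dense_iff_closure_eq, ← H.topologicalClosure_coe, AddSubgroup.coe_eq_univ,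
      addSubgroup_eq_top_of_forall_mFourier_eq_one H.isClosed_topologicalClosure]
    exact fun n hn => h n fun x hx => hn x (H.le_topologicalClosure hx)

end UnitAddTorus

namespace Matrix

variable {ι κ : Type*} [Fintype ι] [Fintype κ]

theorem eq_zero_of_forall_dotProduct_coe_eq_zero {v : κ → ℝ}
    (h : ∀ x, ((v ⬝ᵥ x : ℝ) : UnitAddCircle) = 0) : v = 0 := by
  refine dotProduct_self_eq_zero.mp
    (UnitAddCircle.eq_zero_of_forall_coe_mul_eq_zero fun t => ?_)
  simpa [dotProduct_smul, mul_comm] using h (t • v)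

noncomputable def torusHom (M : Matrix ι κ ℝ) : (κ → ℝ) →+ UnitAddTorus ι :=
  (AddMonoidHom.compLeft (QuotientAddGroup.mk' _) ι).comp M.mulVecLin.toAddMonoidHom

theorem mFourier_torusHom_eq_one_iff (M : Matrix ι κ ℝ) (k : ι → ℤ) (x : κ → ℝ) :
    mFourier k (M.torusHom x) = 1 ↔
      ((vecMul (fun i => (k i : ℝ)) M ⬝ᵥ x : ℝ) : UnitAddCircle) = 0 := by
  rw [mFourier_eq_one_iff, ← dotProduct_mulVec]
  simp [torusHom, dotProduct]

theorem forall_mFourier_torusHom_eq_one_iff (M : Matrix ι κ ℝ) (k : ι → ℤ) :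
    (∀ x, mFourier k (M.torusHom x) = 1) ↔ vecMul (fun i => (k i : ℝ)) M = 0 := by
  simp only [mFourier_torusHom_eq_one_iff]
  exact ⟨eq_zero_of_forall_dotProduct_coe_eq_zero, fun h x => by simp [h]⟩

end Matrix

/-- For `M ∈ ℝ^{m×n}` and `ψ = ρ_m ∘ M : ℝⁿ → 𝕋^m`, the image `ψ(ℝⁿ)` is dense
in `𝕋^m` iff the rows of `M` are linearly independent over `ℚ`, i.e. iff
`kᵀM = 0` with `k ∈ ℤ^m` implies `k = 0`. -/
theorem stmt1 (m n : ℕ) (M : Matrix (Fin m) (Fin n) ℝ) :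
    Dense (Set.range fun x : Fin n → ℝ =>
        fun i => ((M.mulVec x i : ℝ) : AddCircle (1 : ℝ)))
      ↔ ∀ k : Fin m → ℤ, Matrix.vecMul (fun i => (k i : ℝ)) M = 0 → k = 0 := by
  change Dense (M.torusHom.range : Set (UnitAddTorus (Fin m))) ↔ _
  simp only [dense_iff_forall_mFourier_eq_one, AddMonoidHom.mem_range, forall_exists_index,
    forall_apply_eq_imp_iff, Matrix.forall_mFourier_torusHom_eq_one_iff]
end

section
/- Let M ∈ ℝ^{m×n} and ψ = ρ_m ∘ M : ℝⁿ → 𝕋^m. Then the kernel of ψ is topologically isomorphic to ℝ^{n − rank M} × ℤ^{r(M)}, where r(M) is the rank of the subgroup ℤ^m ∩ M ℝⁿ. -/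
/-!
`K` is the preimage under `M` of the lattice `L = ℤ^m ∩ Mℝⁿ`, and `M` maps `K` onto `L`.
Being a subgroup of `ℤ^m`, `L` is discrete and free of finite rank, so this surjection has a
homomorphic section `s`, automatically continuous; then `x ↦ (x - s (M x), M x)` identifies `K`
with `ker M × L` as topological groups, and `ker M ≅ ℝ^{n - rank M}`, `L ≅ ℤ^{r(M)}`.
-/

open Module Submodule

def ContinuousAddEquiv.prodCongr {A B C D : Type*} [TopologicalSpace A]
    [TopologicalSpace B] [TopologicalSpace C] [TopologicalSpace D] [AddZeroClass A]
    [AddZeroClass B] [AddZeroClass C] [AddZeroClass D] (e₁ : A ≃ₜ+ B) (e₂ : C ≃ₜ+ D) :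
    A × C ≃ₜ+ B × D where
  toAddEquiv := e₁.toAddEquiv.prodCongr e₂.toAddEquiv
  continuous_toFun := e₁.continuous.prodMap e₂.continuous
  continuous_invFun := e₁.symm.continuous.prodMap e₂.symm.continuous

noncomputable def Module.Basis.equivFunOfDiscreteTopology {ι R H : Type*} [Finite ι] [Semiring R]
    [TopologicalSpace R] [DiscreteTopology R] [AddCommMonoid H] [Module R H] [TopologicalSpace H]
    [DiscreteTopology H] (b : Basis ι R H) : H ≃ₜ+ (ι → R) :=
  b.equivFun.toAddEquiv.toContinuousAddEquiv fun _ => by simp only [isOpen_discrete]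

section Splitting

variable {V W : Type*} [AddCommGroup V] [AddCommGroup W] (A : V →+ W) (L : AddSubgroup W)

theorem AddMonoidHom.exists_section_of_le_range [Module.Projective ℤ L] (hL : L ≤ A.range) :
    ∃ s : L →+ V, ∀ y, A (s y) = y := by
  obtain ⟨s, hs⟩ := Module.projective_lifting_property A.rangeRestrict.toIntLinearMap
    (AddSubgroup.inclusion hL).toIntLinearMap A.rangeRestrict_surjective
  exact ⟨s.toAddMonoidHom, fun y => congrArg Subtype.val (LinearMap.congr_fun hs y)⟩

def AddSubgroup.comapEquivKerProd (s : L →+ V) (hs : ∀ y, A (s y) = y) :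
    L.comap A ≃+ A.ker × L where
  toFun x := (⟨x - s ⟨A x, x.2⟩, by simp [hs]⟩, ⟨A x, x.2⟩)
  invFun p := ⟨p.1 + s p.2, by simp [hs, A.mem_ker.1 p.1.2]⟩
  left_inv x := by simp
  right_inv p := by ext <;> simp [hs, A.mem_ker.1 p.1.2]
  map_add' x y := by
    have hA : (⟨A (x + y), (x + y).2⟩ : L) = ⟨A x, x.2⟩ + ⟨A y, y.2⟩ :=
      Subtype.ext (map_add A (x : V) y)
    ext
    · simp only [AddSubgroup.coe_add, Prod.fst_add]
      rw [hA, map_add]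
      abel
    · simp

theorem AddSubgroup.nonempty_comap_continuousAddEquiv_ker_prod [TopologicalSpace V]
    [IsTopologicalAddGroup V] [TopologicalSpace W] [DiscreteTopology L] [Module.Projective ℤ L]
    (hA : Continuous A) (hL : L ≤ A.range) : Nonempty (L.comap A ≃ₜ+ A.ker × L) := by
  obtain ⟨s, hs⟩ := A.exists_section_of_le_range L hL
  have hA_restrict : Continuous fun x : L.comap A => (⟨A x, x.2⟩ : L) :=
    (hA.comp continuous_subtype_val).subtype_mk _
  have hs_cont : Continuous s := continuous_of_discreteTopology
  exact ⟨{ L.comapEquivKerProd A s hs with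
    continuous_toFun :=
      ((continuous_subtype_val.sub (hs_cont.comp hA_restrict)).subtype_mk _).prodMk hA_restrict
    continuous_invFun :=
      ((continuous_subtype_val.comp continuous_fst).add
        (hs_cont.comp continuous_snd)).subtype_mk _ }⟩

end Splitting

section Lattice

variable {ι E : Type*} [Finite ι]

theorem Pi.mem_span_basisFun_iff (y : ι → ℝ) :
    y ∈ span ℤ (Set.range (Pi.basisFun ℝ ι)) ↔ ∀ i, ∃ z : ℤ, y i = z := by
  simp [Basis.mem_span_iff_repr_mem, eq_comm]

theorem AddSubgroup.discreteTopology_of_le_span [NormedAddCommGroup E] [NormedSpace ℝ E]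
    (b : Basis ι ℝ E) {L : AddSubgroup E} (hL : L ≤ (span ℤ (Set.range b)).toAddSubgroup) :
    DiscreteTopology L :=
  DiscreteTopology.of_subset (inferInstanceAs (DiscreteTopology (span ℤ (Set.range b)))) hL

theorem AddSubgroup.finite_of_le_span [AddCommGroup E] [Module ℝ E] (b : Basis ι ℝ E)
    {L : AddSubgroup E} (hL : L ≤ (span ℤ (Set.range b)).toAddSubgroup) : Module.Finite ℤ L :=
  have := Module.Finite.span_of_finite ℤ (Set.finite_range b)
  Module.Finite.of_injective (AddSubgroup.inclusion hL).toIntLinearMap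
    (AddSubgroup.inclusion_injective hL)

end Lattice

theorem Matrix.finrank_ker_mulVecLin {K m n : Type*} [Field K] [Fintype m] [Fintype n]
    (M : Matrix m n K) : finrank K (LinearMap.ker M.mulVecLin) = Fintype.card n - M.rank := by
  have := LinearMap.finrank_range_add_finrank_ker M.mulVecLin
  rw [Module.finrank_fintype_fun_eq_card] at this
  rw [Matrix.rank]
  omega

noncomputable def Matrix.kerContinuousAddEquiv {𝕜 : Type*} [NontriviallyNormedField 𝕜]
    [CompleteSpace 𝕜] {m n : ℕ} (M : Matrix (Fin m) (Fin n) 𝕜) :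
    M.mulVecLin.toAddMonoidHom.ker ≃ₜ+ (Fin (n - M.rank) → 𝕜) :=
  (ContinuousLinearEquiv.ofFinrankEq (E := LinearMap.ker M.mulVecLin)
    (by rw [M.finrank_ker_mulVecLin, Fintype.card_fin, Module.finrank_fin_fun])).toContinuousAddEquiv

/-- For `M ∈ ℝ^{m×n}` and `ψ = ρ_m ∘ M : ℝⁿ → 𝕋^m`, the kernel
`K = {x : Mx ∈ ℤ^m}` of `ψ` is topologically isomorphic to
`ℝ^{n - rank M} × ℤ^{r(M)}`, where `r(M)` is the rank of `ℤ^m ∩ Mℝⁿ`. -/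
theorem stmt2 (m n : ℕ) (M : Matrix (Fin m) (Fin n) ℝ)
    (K : AddSubgroup (Fin n → ℝ))
    (hK : ∀ x, x ∈ K ↔ ∀ i, ∃ z : ℤ, M.mulVec x i = (z : ℝ))
    (L : AddSubgroup (Fin m → ℝ))
    (hL : ∀ y, y ∈ L ↔ (∃ x : Fin n → ℝ, M.mulVec x = y) ∧ ∀ i, ∃ z : ℤ, y i = (z : ℝ)) :
    ∃ e : K ≃+ ((Fin (n - M.rank) → ℝ) ×
        (Fin (Module.finrank ℤ (AddSubgroup.toIntSubmodule L)) → ℤ)),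
      Continuous e ∧ Continuous e.symm := by
  set A := M.mulVecLin.toAddMonoidHom
  have hL_int : L ≤ (span ℤ (Set.range (Pi.basisFun ℝ (Fin m)))).toAddSubgroup :=
    fun y hy => (Pi.mem_span_basisFun_iff y).2 ((hL y).1 hy).2
  have hL_range : L ≤ A.range := fun y hy => ((hL y).1 hy).1
  obtain rfl : K = L.comap A := by
    ext x
    rw [hK, AddSubgroup.mem_comap, hL]
    exact ⟨fun h => ⟨⟨x, rfl⟩, h⟩, And.right⟩
  have := L.discreteTopology_of_le_span _ hL_int
  have := L.finite_of_le_span _ hL_int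
  obtain ⟨e⟩ := L.nonempty_comap_continuousAddEquiv_ker_prod A
    M.mulVecLin.continuous_of_finiteDimensional hL_range
  let e' := e.trans (M.kerContinuousAddEquiv.prodCongr
    (Module.finBasis ℤ L).equivFunOfDiscreteTopology)
  exact ⟨e'.toAddEquiv, e'.continuous, e'.symm.continuous⟩
end

section
/- Let M ∈ ℝ^{m×n} and ψ = ρ_m ∘ M : ℝⁿ → 𝕋^m. The image ψ(ℝⁿ) is a closed subgroup of 𝕋^m if and only if r(M) = rank M, i.e., the subspace Mℝⁿ is rational. -/
/-!
Let `V = Mℝⁿ` and `Λ = ℤ^m ∩ V`, a discrete subgroup of `V`, so `rank Λ = dim_ℝ span Λ`, and the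
closedness of `ψ(ℝⁿ) = ρ_m(V)` in the compact torus amounts to its compactness. If `Λ` spans `V`,
it is a full lattice in `V`, and `ρ_m(V)` is the image of the compact closure of a fundamental
domain. Conversely, if `ρ_m(V)` is compact, then `ρ_m|_V` is an open map onto it (open mapping
theorem for σ-compact groups), so `ρ_m(V)` is the image of a single ball: every point of `V` lies
within bounded distance of `Λ`, and a coarsely dense subset of `V` spans `V`.
-/

open Submodule Module Set

theorem exists_norm_sub_le_of_isCompact_range {E G : Type*} [NormedAddCommGroup E]
    [SigmaCompactSpace E] [AddCommGroup G] [TopologicalSpace G] [IsTopologicalAddGroup G]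
    [T2Space G] {φ : E →+ G} (hφ : Continuous φ) (hc : IsCompact (range φ)) :
    ∃ c, ∀ v, ∃ k, φ k = 0 ∧ ‖v - k‖ ≤ c := by
  have : CompactSpace φ.range := isCompact_iff_compactSpace.1 hc
  have hopen : IsOpenMap φ.rangeRestrict :=
    AddMonoidHom.isOpenMap_of_sigmaCompact _ φ.rangeRestrict_surjective (hφ.subtype_mk _)
  obtain ⟨n, hn⟩ := isCompact_univ.elim_directed_cover
    (fun n : ℕ => φ.rangeRestrict '' Metric.ball 0 n) (fun n => hopen _ Metric.isOpen_ball)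
    (fun y _ => by
      obtain ⟨v, rfl⟩ := φ.rangeRestrict_surjective y
      obtain ⟨n, hn⟩ := exists_nat_gt ‖v‖
      exact mem_iUnion.2 ⟨n, v, mem_ball_zero_iff.2 hn, rfl⟩)
    (Monotone.directed_le fun a b hab =>
      image_mono (Metric.ball_subset_ball (by exact_mod_cast hab)))
  refine ⟨n, fun v => ?_⟩
  obtain ⟨b, hb, hbv⟩ := hn (mem_univ (φ.rangeRestrict v))
  refine ⟨v - b, ?_, ?_⟩
  · rw [map_sub, sub_eq_zero]
    exact congrArg Subtype.val hbv.symm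
  · rw [sub_sub_cancel]
    exact (mem_ball_zero_iff.1 hb).le

section

variable {E : Type*} [NormedAddCommGroup E] [NormedSpace ℝ E] [FiniteDimensional ℝ E]

theorem span_eq_top_of_forall_exists_norm_sub_le {S : Set E} {c : ℝ}
    (hS : ∀ v, ∃ s ∈ S, ‖v - s‖ ≤ c) : span ℝ S = ⊤ := by
  by_contra hne
  obtain ⟨f, hf0, hfS⟩ := exists_dual_map_eq_bot_of_lt_top (lt_top_iff_ne_top.2 hne) inferInstance
  obtain ⟨v, hv⟩ : ∃ v, f v ≠ 0 := by
    by_contra! h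
    exact hf0 (LinearMap.ext h)
  let g := LinearMap.toContinuousLinearMap f
  obtain ⟨s, hs, hsv⟩ := hS (((‖g‖ * c + 1) / f v) • v)
  have hfs : f s = 0 := by
    simpa [hfS] using mem_map_of_mem (f := f) (subset_span hs : s ∈ span ℝ S)
  have : ‖g‖ * c + 1 ≤ ‖g‖ * c :=
    calc ‖g‖ * c + 1 = f (((‖g‖ * c + 1) / f v) • v - s) := by
          rw [map_sub, map_smul, hfs, smul_eq_mul, div_mul_cancel₀ _ hv, sub_zero]
      _ ≤ ‖g (((‖g‖ * c + 1) / f v) • v - s)‖ := Real.le_norm_self _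
      _ ≤ ‖g‖ * c := (g.le_opNorm _).trans (by gcongr)
  linarith

theorem isCompact_range_of_span_eq_top {G : Type*} [AddCommGroup G] [TopologicalSpace G]
    {L : Submodule ℤ E} [DiscreteTopology L] (hL : span ℝ (L : Set E) = ⊤)
    {φ : E →+ G} (hφ : Continuous φ) (hφL : ∀ l ∈ L, φ l = 0) : IsCompact (range φ) := by
  have : IsZLattice ℝ L := ⟨hL⟩
  let b := (Module.Free.chooseBasis ℤ L).ofZLatticeBasis ℝ L
  suffices range φ = φ '' closure (ZSpan.fundamentalDomain b) from
    this ▸ (ZSpan.fundamentalDomain_isBounded b).isCompact_closure.image hφ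
  refine (image_subset_range _ _).antisymm' fun _ ⟨v, hv⟩ => ?_
  refine ⟨ZSpan.fract b v, subset_closure (ZSpan.fract_mem_fundamentalDomain b v), ?_⟩
  have hfloor : (ZSpan.floor b v : E) ∈ L :=
    SetLike.ext_iff.mp ((Module.Free.chooseBasis ℤ L).ofZLatticeBasis_span ℝ L) _ |>.mp
      (ZSpan.floor b v).2
  rw [ZSpan.fract_apply, map_sub, hφL _ hfloor, sub_zero, hv]

theorem finrank_int_eq_finrank_span (L : Submodule ℤ E) [DiscreteTopology L] :
    finrank ℤ L = finrank ℝ (span ℝ (L : Set E)) := by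
  let f := (span ℝ (L : Set E)).subtype.restrictScalars ℤ
  let L₀ := L.comap f
  have hL₀ : L₀.map f = L := map_comap_eq_self fun x hx ↦ ⟨⟨x, subset_span hx⟩, rfl⟩
  have : DiscreteTopology L₀ :=
    DiscreteTopology.preimage_of_continuous_injective (L : Set E) continuous_subtype_val
      (injective_subtype _)
  have : IsZLattice ℝ L₀ := ⟨by
    rw [← (map_injective_of_injective (injective_subtype _)).eq_iff, map_span,
      Submodule.map_top, range_subtype]
    exact congrArg _ (SetLike.ext'_iff.mp hL₀)⟩
  rw [← ZLattice.rank ℝ L₀]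
  exact ((equivMapOfInjective f (injective_subtype _) L₀).trans
    (LinearEquiv.ofEq _ _ hL₀)).finrank_eq.symm

theorem span_eq_top_iff_finrank_int_eq (L : Submodule ℤ E) [DiscreteTopology L] :
    span ℝ (L : Set E) = ⊤ ↔ finrank ℤ L = finrank ℝ E := by
  rw [finrank_int_eq_finrank_span]
  exact ⟨fun h => h ▸ finrank_top ℝ E, eq_top_of_finrank_eq⟩

theorem isClosed_range_iff_finrank_int_eq {G : Type*} [AddCommGroup G] [TopologicalSpace G]
    [IsTopologicalAddGroup G] [CompactSpace G] [T2Space G] {φ : E →+ G} (hφ : Continuous φ)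
    {L : Submodule ℤ E} [DiscreteTopology L] (hker : ∀ v, φ v = 0 ↔ v ∈ L) :
    IsClosed (range φ) ↔ finrank ℤ L = finrank ℝ E := by
  rw [← span_eq_top_iff_finrank_int_eq]
  refine ⟨fun h => ?_, fun h =>
    (isCompact_range_of_span_eq_top h hφ fun l => (hker l).2).isClosed⟩
  obtain ⟨c, hc⟩ := exists_norm_sub_le_of_isCompact_range hφ h.isCompact
  exact span_eq_top_of_forall_exists_norm_sub_le fun v =>
    (hc v).imp fun k hk => ⟨(hker k).1 hk.1, hk.2⟩

end

noncomputable def torusProj (ι : Type*) : (ι → ℝ) →+ (ι → AddCircle (1 : ℝ)) :=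
  (QuotientAddGroup.mk' _).compLeft ι

theorem continuous_torusProj (ι : Type*) : Continuous (torusProj ι) :=
  continuous_pi fun i => (AddCircle.continuous_mk' 1).comp (continuous_apply i)

theorem torusProj_eq_zero_iff {ι : Type*} (y : ι → ℝ) :
    torusProj ι y = 0 ↔ ∀ i, ∃ z : ℤ, y i = z := by
  simp only [funext_iff]
  refine forall_congr' fun i => ?_
  show ((y i : ℝ) : AddCircle (1 : ℝ)) = 0 ↔ _
  rw [AddCircle.coe_eq_zero_iff]
  simp [eq_comm]

theorem discreteTopology_of_forall_eq_intCast {ι : Type*} [Finite ι] (L : Submodule ℤ (ι → ℝ))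
    (hL : ∀ y ∈ L, ∀ i, ∃ z : ℤ, y i = z) : DiscreteTopology L := by
  have hsub : (L : Set (ι → ℝ)) ⊆ span ℤ (range (Pi.basisFun ℝ ι)) := fun y hy => by
    rw [SetLike.mem_coe, Basis.mem_span_iff_repr_mem]
    intro i
    obtain ⟨z, hz⟩ := hL y hy i
    exact ⟨z, by simp [hz]⟩
  have := ZSpan.discreteTopology_pi_basisFun (ι := ι)
  exact DiscreteTopology.of_continuous_injective (continuous_inclusion hsub)
    (Set.inclusion_injective hsub)

/-- For `M ∈ ℝ^{m×n}` and `ψ = ρ_m ∘ M : ℝⁿ → 𝕋^m`, the image `ψ(ℝⁿ)` is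
closed in `𝕋^m` iff `r(M) = rank M`, where `r(M)` is the rank of the
subgroup `L = ℤ^m ∩ Mℝⁿ`. -/
theorem stmt3 (m n : ℕ) (M : Matrix (Fin m) (Fin n) ℝ)
    (L : AddSubgroup (Fin m → ℝ))
    (hL : ∀ y, y ∈ L ↔ (∃ x : Fin n → ℝ, M.mulVec x = y) ∧ ∀ i, ∃ z : ℤ, y i = (z : ℝ)) :
    IsClosed (Set.range fun x : Fin n → ℝ =>
        fun i => ((M.mulVec x i : ℝ) : AddCircle (1 : ℝ)))
      ↔ Module.finrank ℤ (AddSubgroup.toIntSubmodule L) = M.rank := by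
  set V := LinearMap.range M.mulVecLin
  have hLV : L.toIntSubmodule ≤ V.restrictScalars ℤ := fun y hy => ((hL y).1 hy).1
  let Λ : Submodule ℤ V := L.toIntSubmodule.comap (V.restrictScalars ℤ).subtype
  have : DiscreteTopology L.toIntSubmodule :=
    discreteTopology_of_forall_eq_intCast _ fun y hy => ((hL y).1 hy).2
  have : DiscreteTopology Λ :=
    DiscreteTopology.preimage_of_continuous_injective (L.toIntSubmodule : Set (Fin m → ℝ))
      continuous_subtype_val Subtype.val_injective
  have hrange : (range fun x : Fin n → ℝ => fun i => ((M.mulVec x i : ℝ) : AddCircle (1 : ℝ)))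
      = range ((torusProj (Fin m)).comp V.subtype.toAddMonoidHom) := by
    ext t
    constructor
    · rintro ⟨x, rfl⟩
      exact ⟨⟨M.mulVec x, x, rfl⟩, rfl⟩
    · rintro ⟨⟨_, x, rfl⟩, rfl⟩
      exact ⟨x, rfl⟩
  have hker : ∀ v : V, torusProj (Fin m) v = 0 ↔ v ∈ Λ := fun v => by
    rw [torusProj_eq_zero_iff]
    exact ⟨fun h => (hL v).2 ⟨v.2, h⟩, fun h => ((hL v).1 h).2⟩
  rw [hrange,
    isClosed_range_iff_finrank_int_eq ((continuous_torusProj _).comp continuous_subtype_val) hker,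
    show finrank ℤ Λ = _ from (comapSubtypeEquivOfLe hLV).finrank_eq]
  rfl
end

section
/- Let e₁,…,e_n be the standard basis of ℝⁿ and let b ∈ ℝⁿ with Σ_j |b_j| < 1. Then Σ over all sign vectors (s₁,…,s_n) ∈ {±1}ⁿ of |det[e₁+s₁b, …, e_n+s_nb]| = 2ⁿ. -/
/-! The matrix `[e₁+s₁b, …, eₙ+sₙb]` is the rank-one perturbation `1 + b sᵀ`, so its determinant is
`1 + ∑ⱼ sⱼ bⱼ`. Since `∑ⱼ |bⱼ| < 1` this is positive, so the absolute values may be dropped, and the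
linear terms cancel in pairs `s, -s`, leaving `2ⁿ` copies of `1`. -/

open Finset

theorem Matrix.det_one_add_col_mul_row {ι R : Type*} [Fintype ι] [DecidableEq ι] [CommRing R]
    (u v : ι → R) :
    Matrix.det (Matrix.of fun i j => (if i = j then (1 : R) else 0) + v j * u i)
      = 1 + ∑ j, v j * u j := by
  have h : (Matrix.of fun i j => (if i = j then (1 : R) else 0) + v j * u i)
      = 1 + Matrix.replicateCol Unit u * Matrix.replicateRow Unit v := by
    ext i j
    simp [Matrix.one_apply, Matrix.mul_apply, mul_comm]
  rw [h, Matrix.det_one_add_replicateCol_mul_replicateRow, dotProduct]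

theorem abs_sum_sign_mul_le {ι R : Type*} [Fintype ι] [Ring R] [LinearOrder R] [IsOrderedRing R]
    (s : ι → Bool) (b : ι → R) :
    |∑ j, (if s j then (1 : R) else -1) * b j| ≤ ∑ j, |b j| :=
  calc |∑ j, (if s j then (1 : R) else -1) * b j|
      ≤ ∑ j, |(if s j then (1 : R) else -1) * b j| := abs_sum_le_sum_abs _ _
    _ = ∑ j, |b j| := by
      refine sum_congr rfl fun j _ => ?_
      cases s j <;> simp

theorem sum_sum_sign_mul_eq_zero {ι R : Type*} [Fintype ι] [DecidableEq ι] [Ring R] (b : ι → R) :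
    ∑ s : ι → Bool, ∑ j, (if s j then (1 : R) else -1) * b j = 0 := by
  refine sum_involution (fun s _ => fun j => !s j) (fun s _ => ?_) (fun s _ hs => ?_)
    (fun _ _ => mem_univ _) (fun s _ => by simp)
  · rw [← sum_add_distrib]
    refine sum_eq_zero fun j _ => ?_
    cases h : s j <;> simp [h]
  · obtain ⟨j, -, -⟩ := exists_ne_zero_of_sum_ne_zero hs
    exact fun h => Bool.not_ne_self (s j) (congrFun h j)

/-- If `Σ_j |b_j| < 1` then the sum over all sign vectors `s ∈ {±1}ⁿ` of
`|det[e₁+s₁b, …, eₙ+sₙb]|` equals `2ⁿ`. -/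
theorem stmt11 (n : ℕ) (b : Fin n → ℝ) (hb : ∑ i, |b i| < 1) :
    ∑ s : Fin n → Bool,
      |Matrix.det (Matrix.of fun i j =>
        (if i = j then (1 : ℝ) else 0) + (if s j then 1 else -1) * b i)|
      = 2 ^ n := by
  have hpos (s : Fin n → Bool) : 0 < 1 + ∑ j, (if s j then (1 : ℝ) else -1) * b j := by
    have := neg_abs_le (∑ j, (if s j then (1 : ℝ) else -1) * b j)
    linarith [abs_sum_sign_mul_le s b]
  calc ∑ s : Fin n → Bool,
      |Matrix.det (Matrix.of fun i j =>
        (if i = j then (1 : ℝ) else 0) + (if s j then 1 else -1) * b i)|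
      = ∑ s : Fin n → Bool, (1 + ∑ j, (if s j then (1 : ℝ) else -1) * b j) := by
        refine sum_congr rfl fun s _ => ?_
        rw [Matrix.det_one_add_col_mul_row, abs_of_pos (hpos s)]
    _ = 2 ^ n := by
        rw [sum_add_distrib, sum_sum_sign_mul_eq_zero]
        simp
end

section
/- Let δ ∈ (−1,1), δ ≠ 0, and ω₁, ω₂ > 0 with ω₂/ω₁ ≤ 1. Define f(z) := e^{2πiω₁z} − e^{−2πiω₁z} + δ(e^{2πiω₂z} − e^{−2πiω₂z}) for z ∈ ℂ. Then every zero of f is real. -/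
/-!
Write `a = 2πω₁`, `b = 2πω₂`, so that `f(z) = 2i (sin(az) + δ sin(bz))`. The zero set is stable
under conjugation, so it suffices to rule out a zero `z = x + iy` with `y > 0`. Put
`S = sin(az) + δ sin(bz)` and `C = cos(az) + δ cos(bz)`; then
`Im(S·C̄) = sinh(ay)cosh(ay) + δ² sinh(by)cosh(by) + δ cos((a-b)x) sinh((a+b)y)`,
which is bounded below by `(sinh(ay) - |δ| sinh(by))(cosh(ay) - |δ| cosh(by)) > 0`
because `0 < b ≤ a` and `|δ| < 1`. Hence `S ≠ 0`.
-/

open Complex ComplexConjugate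

theorem Complex.exp_mul_I_sub_exp_neg_mul_I (w : ℂ) :
    exp (w * I) - exp (-(w * I)) = 2 * I * sin w := by
  rw [mul_right_comm, two_sin, neg_mul]
  linear_combination (exp (w * I) - exp (-(w * I))) * I_sq

theorem Complex.sin_ofReal_mul (a : ℝ) (z : ℂ) :
    sin (a * z) = Real.sin (a * z.re) * Real.cosh (a * z.im)
      + Real.cos (a * z.re) * Real.sinh (a * z.im) * I := by
  conv_lhs => rw [← re_add_im z, mul_add, ← mul_assoc, sin_add_mul_I]
  push_cast
  ring_nf

theorem mul_add_sq_mul_add_mul_mul_pos {s₁ c₁ s₂ c₂ δ κ : ℝ} (hs₂ : 0 < s₂) (hs : s₂ ≤ s₁)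
    (hc₂ : 0 < c₂) (hc : c₂ ≤ c₁) (hδ : |δ| < 1) (hκ : |κ| ≤ 1) :
    0 < s₁ * c₁ + δ ^ 2 * (s₂ * c₂) + δ * κ * (s₁ * c₂ + c₁ * s₂) := by
  have hδ₀ := abs_nonneg δ
  have hs' : 0 < s₁ - |δ| * s₂ := by nlinarith
  have hc' : 0 < c₁ - |δ| * c₂ := by nlinarith
  have hcross : 0 ≤ s₁ * c₂ + c₁ * s₂ := by nlinarith
  have hδκ : -|δ| ≤ δ * κ := by
    have : |δ * κ| ≤ |δ| := by rw [abs_mul]; exact mul_le_of_le_one_right hδ₀ hκ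
    exact (abs_le.1 this).1
  calc 0 < (s₁ - |δ| * s₂) * (c₁ - |δ| * c₂) := mul_pos hs' hc'
    _ = s₁ * c₁ + |δ| ^ 2 * (s₂ * c₂) + -|δ| * (s₁ * c₂ + c₁ * s₂) := by ring
    _ ≤ s₁ * c₁ + δ ^ 2 * (s₂ * c₂) + δ * κ * (s₁ * c₂ + c₁ * s₂) := by
      rw [sq_abs]; gcongr

theorem Complex.sin_mul_add_mul_sin_mul_ne_zero {a b δ : ℝ} (hb : 0 < b) (hba : b ≤ a)
    (hδ : |δ| < 1) {z : ℂ} (hz : 0 < z.im) : sin (a * z) + δ * sin (b * z) ≠ 0 := by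
  intro h
  rw [sin_ofReal_mul, sin_ofReal_mul] at h
  have hre := congrArg re h
  have him := congrArg im h
  simp only [add_re, add_im, mul_re, mul_im, ofReal_re, ofReal_im, I_re, I_im, zero_re,
    zero_im] at hre him
  set x := z.re
  set y := z.im
  have hby : b * y ≤ a * y := mul_le_mul_of_nonneg_right hba hz.le
  -- the left-hand side is `Im(S·C̄)` of the header, which vanishes with `S`
  have hIm : Real.sinh (a * y) * Real.cosh (a * y) + δ ^ 2 * (Real.sinh (b * y) * Real.cosh (b * y))
      + δ * Real.cos (a * x - b * x)
        * (Real.sinh (a * y) * Real.cosh (b * y) + Real.cosh (a * y) * Real.sinh (b * y)) = 0 := by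
    rw [Real.cos_sub]
    linear_combination
      (Real.cos (a * x) * Real.cosh (a * y) + δ * (Real.cos (b * x) * Real.cosh (b * y))) * him
      + (Real.sin (a * x) * Real.sinh (a * y) + δ * (Real.sin (b * x) * Real.sinh (b * y))) * hre
      - Real.sinh (a * y) * Real.cosh (a * y) * Real.sin_sq_add_cos_sq (a * x)
      - δ ^ 2 * Real.sinh (b * y) * Real.cosh (b * y) * Real.sin_sq_add_cos_sq (b * x)
  refine (mul_add_sq_mul_add_mul_mul_pos (Real.sinh_pos_iff.2 (by positivity))
    (Real.sinh_le_sinh.2 hby) (Real.cosh_pos _) ?_ hδ (Real.abs_cos_le_one _)).ne' hIm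
  have hb' : 0 < b * y := by positivity
  rwa [Real.cosh_le_cosh, abs_of_pos hb', abs_of_pos (hb'.trans_le hby)]

theorem Complex.im_eq_zero_of_sin_mul_add_mul_sin_mul_eq_zero {a b δ : ℝ} (hb : 0 < b)
    (hba : b ≤ a) (hδ : |δ| < 1) {z : ℂ} (h : sin (a * z) + δ * sin (b * z) = 0) :
    z.im = 0 := by
  have h_conj : sin (a * conj z) + δ * sin (b * conj z) = 0 := by
    simpa [← sin_conj] using congrArg conj h
  rcases lt_trichotomy z.im 0 with hneg | hzero | hpos
  · exact absurd h_conj (sin_mul_add_mul_sin_mul_ne_zero hb hba hδ (by simpa using hneg))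
  · exact hzero
  · exact absurd h (sin_mul_add_mul_sin_mul_ne_zero hb hba hδ hpos)

theorem stmt13_general (δ ω₁ ω₂ : ℝ) (hδ : δ ∈ Set.Ioo (-1 : ℝ) 1)
    (hω₁ : 0 < ω₁) (hω₂ : 0 < ω₂) (hr : ω₂ / ω₁ ≤ 1) (z : ℂ)
    (hz : Complex.exp (((2 * Real.pi * ω₁ : ℝ) : ℂ) * Complex.I * z)
        - Complex.exp (-(((2 * Real.pi * ω₁ : ℝ) : ℂ) * Complex.I * z))
        + (δ : ℂ) * (Complex.exp (((2 * Real.pi * ω₂ : ℝ) : ℂ) * Complex.I * z)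
            - Complex.exp (-(((2 * Real.pi * ω₂ : ℝ) : ℂ) * Complex.I * z))) = 0) :
    z.im = 0 := by
  simp only [mul_right_comm _ I z, exp_mul_I_sub_exp_neg_mul_I] at hz
  have hsin : sin (((2 * Real.pi * ω₁ : ℝ) : ℂ) * z) + δ * sin (((2 * Real.pi * ω₂ : ℝ) : ℂ) * z)
      = 0 :=
    (mul_eq_zero.1 (by linear_combination hz : 2 * I * (_ + _) = 0)).resolve_left (by simp)
  have hω : ω₂ ≤ ω₁ := (div_le_one hω₁).1 hr
  exact im_eq_zero_of_sin_mul_add_mul_sin_mul_eq_zero (by positivity)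
    (by gcongr) (abs_lt.2 hδ) hsin

/-- For `δ ∈ (−1,1) \ {0}` and `ω₁, ω₂ > 0` with `ω₂/ω₁ ≤ 1`, every zero of
`f(z) = e^{2πiω₁z} − e^{−2πiω₁z} + δ(e^{2πiω₂z} − e^{−2πiω₂z})` is real. -/
theorem stmt13 (δ ω₁ ω₂ : ℝ) (hδ : δ ∈ Set.Ioo (-1 : ℝ) 1) (hδ0 : δ ≠ 0)
    (hω₁ : 0 < ω₁) (hω₂ : 0 < ω₂) (hr : ω₂ / ω₁ ≤ 1) (z : ℂ)
    (hz : Complex.exp (((2 * Real.pi * ω₁ : ℝ) : ℂ) * Complex.I * z)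
        - Complex.exp (-(((2 * Real.pi * ω₁ : ℝ) : ℂ) * Complex.I * z))
        + (δ : ℂ) * (Complex.exp (((2 * Real.pi * ω₂ : ℝ) : ℂ) * Complex.I * z)
            - Complex.exp (-(((2 * Real.pi * ω₂ : ℝ) : ℂ) * Complex.I * z))) = 0) :
    z.im = 0 :=
  stmt13_general δ ω₁ ω₂ hδ hω₁ hω₂ hr z hz
end
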